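/- Let $-\infty\le a<b\le\infty$, $q:(a,b)\to\mathbb{R}$, $\lambda\in\mathbb{R}$, $\gamma\in(0,\infty)$, and let $\phi_\lambda:(a,b)\to\mathbb{R}$ be twice differentiable with $-\phi_\lambda''+q\phi_\lambda=\lambda\phi_\lambda$ on $(a,b)$ and $\int_a^x\phi_\lambda(y)^2dy<\infty$ for all $x\in(a,b)$. Set $S(x)=\gamma^{-1}+\int_a^x\phi_\lambda(y)^2dy$ and $\tilde\phi=\phi_\lambda/S$. Let $z\in\mathbb{C}$, $z\ne\lambda$, and let $\theta,\phi:(a,b)\to\mathbb{C}$ be twice differentiable solutions of $-u''+qu=zu$ on $(a,b)$ with $W_x(\theta,\phi)=1$ for all $x$. Define $\phi_\gamma(x) = \phi(x) + \tfrac{1}{z-\lambda}\tilde\phi(x)W_x(\phi_\lambda,\phi)$ and $\theta_\gamma(x) = \theta(x) + \tfrac{1}{z-\lambda}\big(\tilde\phi(x)W_x(\phi_\lambda,\theta) + \gamma\,\phi_\gamma(x)\big)$. Then $W_x(\theta_\gamma,\phi_\gamma)=1$ for all $x\in(a,b)$. -/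

import Mathlib

/-!
Write `U = φ_λ`, `ψ = φ̃ = U/S`, `c = (z - λ)⁻¹`. The term `c γ φ_γ` in `θ_γ` does not change the
Wronskian with `φ_γ`, since `W(φ_γ, φ_γ) = 0`. For solutions, `W(U, f)' = (λ - z) U f`, so
`c W(U, f)' = -U f`, and expanding with the identities `θ W(U, φ) - φ W(U, θ) = U W(θ, φ)` and
`θ' W(U, φ) - φ' W(U, θ) = U' W(θ, φ)` gives
`W(θ_γ, φ_γ) = W(θ, φ) (1 + c (W(U, ψ) + (U ψ)²))`.
Because `S' = U²`, the function `ψ` solves the Riccati equation `W(U, ψ) = -(U ψ)²`, so the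
correction vanishes.
-/

open Set MeasureTheory Filter Topology

section Wronskian

variable {A : Type*} [NormedCommRing A] [NormedAlgebra ℝ A]

noncomputable def wronskian (f g : ℝ → A) (x : ℝ) : A :=
  f x * deriv g x - deriv f x * g x

theorem hasDerivAt_wronskian {f g : ℝ → A} {x : ℝ}
    (hf : DifferentiableAt ℝ f x) (hf' : DifferentiableAt ℝ (deriv f) x)
    (hg : DifferentiableAt ℝ g x) (hg' : DifferentiableAt ℝ (deriv g) x) :
    HasDerivAt (wronskian f g) (f x * deriv (deriv g) x - deriv (deriv f) x * g x) x := by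
  refine ((hf.hasDerivAt.fun_mul hg'.hasDerivAt).fun_sub
    (hf'.hasDerivAt.fun_mul hg.hasDerivAt)).congr_deriv ?_
  ring

theorem hasDerivAt_wronskian_of_schrodinger {f g q : ℝ → A} {z₁ z₂ : A} {x : ℝ}
    (hf : DifferentiableAt ℝ f x) (hf' : DifferentiableAt ℝ (deriv f) x)
    (hg : DifferentiableAt ℝ g x) (hg' : DifferentiableAt ℝ (deriv g) x)
    (hfeq : -deriv (deriv f) x + q x * f x = z₁ * f x)
    (hgeq : -deriv (deriv g) x + q x * g x = z₂ * g x) :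
    HasDerivAt (wronskian f g) ((z₁ - z₂) * (f x * g x)) x := by
  refine (hasDerivAt_wronskian hf hf' hg hg').congr_deriv ?_
  linear_combination g x * hfeq - f x * hgeq

end Wronskian

theorem deriv_ofReal_comp (f : ℝ → ℝ) (x : ℝ) :
    deriv (fun y => (f y : ℂ)) x = deriv f x := by
  by_cases hf : DifferentiableAt ℝ f x
  · exact hf.hasDerivAt.ofReal_comp.deriv
  · have hfC : ¬DifferentiableAt ℝ (fun y => (f y : ℂ)) x := fun h => hf <| by
      simpa [Function.comp_def] using
        (Complex.reCLM.hasFDerivAt.comp_hasDerivAt x h.hasDerivAt).differentiableAt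
    rw [deriv_zero_of_not_differentiableAt hf, deriv_zero_of_not_differentiableAt hfC,
      Complex.ofReal_zero]

theorem wronskian_ofReal_comp (f g : ℝ → ℝ) (x : ℝ) :
    wronskian (fun y => (f y : ℂ)) (fun y => (g y : ℂ)) x = wronskian f g x := by
  simp [wronskian, deriv_ofReal_comp]

theorem wronskian_div_of_hasDerivAt_sq {u S : ℝ → ℝ} {x : ℝ} (hu : DifferentiableAt ℝ u x)
    (hS : HasDerivAt S (u x ^ 2) x) (hSx : S x ≠ 0) :
    wronskian u (fun y => u y / S y) x = -(u x * (u x / S x)) ^ 2 := by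
  rw [wronskian, (hu.hasDerivAt.fun_div hS hSx).deriv]
  field_simp
  ring

theorem hasDerivAt_setIntegral_ereal_lt {a : EReal} {f : ℝ → ℝ} {x d : ℝ}
    (hax : a < x) (hxd : x < d) (hint : IntegrableOn f {y : ℝ | a < (y : EReal) ∧ y < d})
    (hcont : ContinuousAt f x) :
    HasDerivAt (fun t => ∫ y in {y : ℝ | a < (y : EReal) ∧ y < t}, f y) (f x) x := by
  have hopen : IsOpen {y : ℝ | a < (y : EReal) ∧ y < d} :=
    (isOpen_lt continuous_const continuous_coe_real_ereal).inter
      (isOpen_lt continuous_id continuous_const)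
  have hnhds : {y : ℝ | a < (y : EReal) ∧ y < d} ∈ 𝓝 x := hopen.mem_nhds ⟨hax, hxd⟩
  have hint_xd : IntervalIntegrable f volume x d :=
    (intervalIntegrable_iff_integrableOn_Ioo_of_le hxd.le).2 <|
      hint.mono_set fun y hy => ⟨hax.trans (by exact_mod_cast hy.1), hy.2⟩
  have hsplit : ∀ t ∈ {y : ℝ | a < (y : EReal) ∧ y < d},
      ∫ y in {y : ℝ | a < (y : EReal) ∧ y < t}, f y
        = (∫ y in {y : ℝ | a < (y : EReal) ∧ y < d}, f y) - ∫ y in t..d, f y := by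
    rintro t ⟨hat, htd⟩
    have hunion : {y : ℝ | a < (y : EReal) ∧ y < d}
        = {y : ℝ | a < (y : EReal) ∧ y < t} ∪ Ico t d := by
      ext y
      simp only [mem_ofPred_eq, mem_union, mem_Ico]
      constructor
      · rintro ⟨hay, hyd⟩
        exact (lt_or_ge y t).imp (fun hyt => ⟨hay, hyt⟩) fun hty => ⟨hty, hyd⟩
      · rintro (⟨hay, hyt⟩ | ⟨hty, hyd⟩)
        · exact ⟨hay, hyt.trans htd⟩
        · exact ⟨hat.trans_le (by exact_mod_cast hty), hyd⟩
    have hdisj : Disjoint {y : ℝ | a < (y : EReal) ∧ y < t} (Ico t d) :=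
      disjoint_left.2 fun y hy hy' => hy'.1.not_gt hy.2
    rw [hunion] at hint
    rw [hunion, setIntegral_union hdisj measurableSet_Ico (hint.mono_set subset_union_left)
      (hint.mono_set subset_union_right), intervalIntegral.integral_of_le htd.le,
      integral_Ico_eq_integral_Ioc, add_sub_cancel_right]
  have hmeas : StronglyMeasurableAtFilter f (𝓝 x) :=
    AEStronglyMeasurable.stronglyMeasurableAtFilter_of_mem hint.aestronglyMeasurable hnhds
  refine (((intervalIntegral.integral_hasDerivAt_left hint_xd hmeas hcont).const_sub
    (∫ y in {y : ℝ | a < (y : EReal) ∧ y < d}, f y)).congr_deriv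
    (neg_neg _)).congr_of_eventuallyEq ?_
  filter_upwards [hnhds] using hsplit

theorem wronskian_doubleCommutation {θ φ U ψ φγ θγ : ℝ → ℂ} {z l γ : ℂ} {x : ℝ} (hzl : z ≠ l)
    (hθ : DifferentiableAt ℝ θ x) (hφ : DifferentiableAt ℝ φ x) (hψ : DifferentiableAt ℝ ψ x)
    (hriccati : wronskian U ψ x = -(U x * ψ x) ^ 2)
    (hWθ : HasDerivAt (wronskian U θ) ((l - z) * (U x * θ x)) x)
    (hWφ : HasDerivAt (wronskian U φ) ((l - z) * (U x * φ x)) x)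
    (hφγ : φγ = fun y => φ y + (z - l)⁻¹ * ψ y * wronskian U φ y)
    (hθγ : θγ = fun y => θ y + (z - l)⁻¹ * (ψ y * wronskian U θ y + γ * φγ y)) :
    wronskian θγ φγ x = wronskian θ φ x := by
  have hφγ' : HasDerivAt φγ (deriv φ x + ((z - l)⁻¹ * deriv ψ x * wronskian U φ x
      + (z - l)⁻¹ * ψ x * ((l - z) * (U x * φ x)))) x :=
    hφγ ▸ hφ.hasDerivAt.add ((hψ.hasDerivAt.const_mul _).mul hWφ)
  have hθγ' : HasDerivAt θγ (deriv θ x + (z - l)⁻¹ * ((deriv ψ x * wronskian U θ x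
      + ψ x * ((l - z) * (U x * θ x))) + γ * (deriv φ x + ((z - l)⁻¹ * deriv ψ x * wronskian U φ x
      + (z - l)⁻¹ * ψ x * ((l - z) * (U x * φ x)))))) x := by
    rw [hθγ]
    exact hθ.hasDerivAt.fun_add
      (((hψ.hasDerivAt.fun_mul hWθ).fun_add (hφγ'.const_mul γ)).const_mul (z - l)⁻¹)
  have hzl' : z - l ≠ 0 := sub_ne_zero.2 hzl
  rw [wronskian, hφγ'.deriv, hθγ'.deriv, hθγ, hφγ]
  simp only [wronskian] at hriccati ⊢
  field_simp
  linear_combination (z - l) ^ 2 * (θ x * deriv φ x - deriv θ x * φ x) * hriccati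

theorem stmt_8_general (a b : EReal)
    (q phil : ℝ → ℝ) (lam γ : ℝ) (hγ : 0 < γ)
    (E : Set ℝ) (hE : E = {x : ℝ | a < (x : EReal) ∧ (x : EReal) < b})
    (hl_d1 : ∀ x ∈ E, DifferentiableAt ℝ phil x)
    (hl_d2 : ∀ x ∈ E, DifferentiableAt ℝ (deriv phil) x)
    (hl_eq : ∀ x ∈ E, -deriv (deriv phil) x + q x * phil x = lam * phil x)
    (hl_int : ∀ x ∈ E,
      IntegrableOn (fun y => phil y ^ 2) {y : ℝ | a < (y : EReal) ∧ y < x})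
    (Sw : ℝ → ℝ)
    (hSw : Sw = fun x => γ⁻¹ + ∫ y in {y : ℝ | a < (y : EReal) ∧ y < x}, phil y ^ 2)
    (phit : ℝ → ℝ) (hphit : phit = fun x => phil x / Sw x)
    (z : ℂ) (hzlam : z ≠ (lam : ℂ))
    (theta phi : ℝ → ℂ)
    (hth_d1 : ∀ x ∈ E, DifferentiableAt ℝ theta x)
    (hth_d2 : ∀ x ∈ E, DifferentiableAt ℝ (deriv theta) x)
    (hth_eq : ∀ x ∈ E, -deriv (deriv theta) x + (q x : ℂ) * theta x = z * theta x)
    (hph_d1 : ∀ x ∈ E, DifferentiableAt ℝ phi x)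
    (hph_d2 : ∀ x ∈ E, DifferentiableAt ℝ (deriv phi) x)
    (hph_eq : ∀ x ∈ E, -deriv (deriv phi) x + (q x : ℂ) * phi x = z * phi x)
    (hW : ∀ x ∈ E, theta x * deriv phi x - deriv theta x * phi x = 1)
    (phig thetag : ℝ → ℂ)
    (hphig : phig = fun x => phi x
      + (z - lam)⁻¹ * Complex.ofReal (phit x) *
        (Complex.ofReal (phil x) * deriv phi x
          - Complex.ofReal (deriv phil x) * phi x))
    (hthetag : thetag = fun x => theta x
      + (z - lam)⁻¹ * (Complex.ofReal (phit x) *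
          (Complex.ofReal (phil x) * deriv theta x
            - Complex.ofReal (deriv phil x) * theta x)
        + (γ : ℂ) * phig x)) :
    ∀ x ∈ E, thetag x * deriv phig x - deriv thetag x * phig x = 1 := by
  subst hE hphit
  intro x hx
  obtain ⟨hax, hxb⟩ := id hx
  obtain ⟨d, hxd, hdb⟩ := EReal.lt_iff_exists_real_btwn.1 hxb
  have hS : HasDerivAt Sw (phil x ^ 2) x := hSw ▸
    (hasDerivAt_setIntegral_ereal_lt hax (by exact_mod_cast hxd)
      (hl_int d ⟨hax.trans hxd, hdb⟩) ((hl_d1 x hx).continuousAt.pow 2)).const_add γ⁻¹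
  have hSx : Sw x ≠ 0 := by
    rw [hSw]
    exact (add_pos_of_pos_of_nonneg (inv_pos.2 hγ) (integral_nonneg fun _ => sq_nonneg _)).ne'
  set U : ℝ → ℂ := fun y => (phil y : ℂ)
  have hU' : deriv U = fun y => ((deriv phil y : ℝ) : ℂ) := funext (deriv_ofReal_comp phil)
  have hU'' : deriv (deriv U) = fun y => ((deriv (deriv phil) y : ℝ) : ℂ) := by
    rw [hU']; exact funext (deriv_ofReal_comp _)
  have hUd : DifferentiableAt ℝ U x := (hl_d1 x hx).hasDerivAt.ofReal_comp.differentiableAt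
  have hUd' : DifferentiableAt ℝ (deriv U) x :=
    hU' ▸ (hl_d2 x hx).hasDerivAt.ofReal_comp.differentiableAt
  have hUeq : -deriv (deriv U) x + (q x : ℂ) * U x = lam * U x := by
    simp only [hU'', U]
    exact_mod_cast hl_eq x hx
  have hWθ := hasDerivAt_wronskian_of_schrodinger (q := fun y => (q y : ℂ))
    hUd hUd' (hth_d1 x hx) (hth_d2 x hx) hUeq (hth_eq x hx)
  have hWφ := hasDerivAt_wronskian_of_schrodinger (q := fun y => (q y : ℂ))
    hUd hUd' (hph_d1 x hx) (hph_d2 x hx) hUeq (hph_eq x hx)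
  have hψ := ((hl_d1 x hx).hasDerivAt.fun_div hS hSx).ofReal_comp.differentiableAt
  refine (wronskian_doubleCommutation (γ := γ) hzlam (hth_d1 x hx) (hph_d1 x hx) hψ ?_ hWθ hWφ
    ?_ ?_).trans (hW x hx)
  · rw [wronskian_ofReal_comp, wronskian_div_of_hasDerivAt_sq (hl_d1 x hx) hS hSx]
    push_cast
    rfl
  · rw [hphig]
    simp only [wronskian, hU', U]
  · rw [hthetag]
    simp only [wronskian, hU', U]

/-- the double commutation transforms with coupling `γ ∈ (0,∞)`,
`φ_γ = φ + (z-λ)⁻¹ φ̃ W(φ_λ,φ)` and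
`θ_γ = θ + (z-λ)⁻¹ (φ̃ W(φ_λ,θ) + γ φ_γ)`, of a fundamental system `θ, φ`
(`W(θ,φ) ≡ 1`) of `-u'' + q u = z u` satisfy `W(θ_γ, φ_γ) ≡ 1`, where
`S(x) = γ⁻¹ + ∫_a^x φ_λ²` and `φ̃ = φ_λ/S`. -/
theorem stmt_8 (a b : EReal) (hab : a < b)
    (q phil : ℝ → ℝ) (lam γ : ℝ) (hγ : 0 < γ)
    (E : Set ℝ) (hE : E = {x : ℝ | a < (x : EReal) ∧ (x : EReal) < b})
    (hl_d1 : ∀ x ∈ E, DifferentiableAt ℝ phil x)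
    (hl_d2 : ∀ x ∈ E, DifferentiableAt ℝ (deriv phil) x)
    (hl_eq : ∀ x ∈ E, -deriv (deriv phil) x + q x * phil x = lam * phil x)
    (hl_int : ∀ x ∈ E,
      IntegrableOn (fun y => phil y ^ 2) {y : ℝ | a < (y : EReal) ∧ y < x})
    (Sw : ℝ → ℝ)
    (hSw : Sw = fun x => γ⁻¹ + ∫ y in {y : ℝ | a < (y : EReal) ∧ y < x}, phil y ^ 2)
    (phit : ℝ → ℝ) (hphit : phit = fun x => phil x / Sw x)
    (z : ℂ) (hzlam : z ≠ (lam : ℂ))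
    (theta phi : ℝ → ℂ)
    (hth_d1 : ∀ x ∈ E, DifferentiableAt ℝ theta x)
    (hth_d2 : ∀ x ∈ E, DifferentiableAt ℝ (deriv theta) x)
    (hth_eq : ∀ x ∈ E, -deriv (deriv theta) x + (q x : ℂ) * theta x = z * theta x)
    (hph_d1 : ∀ x ∈ E, DifferentiableAt ℝ phi x)
    (hph_d2 : ∀ x ∈ E, DifferentiableAt ℝ (deriv phi) x)
    (hph_eq : ∀ x ∈ E, -deriv (deriv phi) x + (q x : ℂ) * phi x = z * phi x)
    (hW : ∀ x ∈ E, theta x * deriv phi x - deriv theta x * phi x = 1)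
    (phig thetag : ℝ → ℂ)
    (hphig : phig = fun x => phi x
      + (z - lam)⁻¹ * Complex.ofReal (phit x) *
        (Complex.ofReal (phil x) * deriv phi x
          - Complex.ofReal (deriv phil x) * phi x))
    (hthetag : thetag = fun x => theta x
      + (z - lam)⁻¹ * (Complex.ofReal (phit x) *
          (Complex.ofReal (phil x) * deriv theta x
            - Complex.ofReal (deriv phil x) * theta x)
        + (γ : ℂ) * phig x)) :
    ∀ x ∈ E, thetag x * deriv phig x - deriv thetag x * phig x = 1 :=
  stmt_8_general a b q phil lam γ hγ E hE hl_d1 hl_d2 hl_eq hl_int Sw hSw phit hphit z hzlam theta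
    phi hth_d1 hth_d2 hth_eq hph_d1 hph_d2 hph_eq hW phig thetag hphig hthetag
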